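/- Let n ≥ 2. There exists a constant c > 0, depending only on n, such that for every X' ∈ ℝ^{n-1} whose first coordinate satisfies X₁ ≥ |X'|/5 and with 1/2 ≤ |X'| ≤ 5/2, and for every τ with 0 < τ ≤ 1, one has ∫_{|X'-z'| ≤ |X'|/10} e^{-|X'-z'|²/τ} (z₁/|z'|ⁿ) dz' ≥ c τ^{(n-1)/2}. -/

import Mathlib

/-!
On the ball `|X' - z'| ≤ |X'|/10` the point `z'` stays in the cone around the first axis:
`z₁ ≥ |X'|/10 ≥ 1/20` and `|z'| ≤ 11/4`, so the integrand is continuous and nonnegative there,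
and `z₁/|z'|ⁿ ≥ (1/20)/(11/4)ⁿ`. Discarding all of the ball except the concentric ball of
radius `√τ/20`, where the Gaussian factor is at least `e^{-1/400}`, leaves a lower bound by a
constant times the volume `(√τ/20)^{n-1} |B₁|` of that ball.
-/

open MeasureTheory Real Set Metric

lemma mul_measureReal_le_setIntegral_of_subset {α : Type*} [MeasurableSpace α] {μ : Measure α}
    {f : α → ℝ} {s t : Set α} {c : ℝ} (hs : MeasurableSet s) (ht : MeasurableSet t)
    (hμs : μ s ≠ ⊤) (hst : s ⊆ t) (hf : IntegrableOn f t μ) (hf₀ : ∀ x ∈ t, 0 ≤ f x)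
    (hc : ∀ x ∈ s, c ≤ f x) :
    c * μ.real s ≤ ∫ x in t, f x ∂μ :=
  (setIntegral_ge_of_const_le_real hs hμs hc (hf.mono_set hst)).trans
    (setIntegral_mono_set hf (ae_restrict_of_forall_mem ht hf₀) hst.eventuallyLE)

lemma exp_neg_sq_le_exp_neg_sq_div {t s τ : ℝ} (hτ : 0 < τ) (ht₀ : 0 ≤ t) (ht : t ≤ s * √τ) :
    exp (-s ^ 2) ≤ exp (-t ^ 2 / τ) := by
  rw [exp_le_exp, neg_div, neg_le_neg_iff, div_le_iff₀ hτ]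
  calc t ^ 2 ≤ (s * √τ) ^ 2 := pow_le_pow_left₀ ht₀ ht 2
    _ = s ^ 2 * τ := by rw [mul_pow, sq_sqrt hτ.le]

section Cone

variable {ι : Type*} [Fintype ι] {X z : EuclideanSpace ℝ ι} {i : ι}

lemma norm_div_ten_le_apply_of_mem_closedBall (hX : ‖X‖ / 5 ≤ X i)
    (hz : z ∈ closedBall X (‖X‖ / 10)) : ‖X‖ / 10 ≤ z i := by
  have hdist : |z i - X i| ≤ ‖X‖ / 10 :=
    (PiLp.dist_apply_le z X i).trans (mem_closedBall.mp hz)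
  linarith [(abs_le.mp hdist).1]

lemma integrableOn_exp_mul_div_norm_pow (n : ℕ) {τ r : ℝ}
    (h₀ : (0 : EuclideanSpace ℝ ι) ∉ closedBall X r) :
    IntegrableOn (fun z : EuclideanSpace ℝ ι => exp (-‖X - z‖ ^ 2 / τ) * (z i / ‖z‖ ^ n))
      (closedBall X r) := by
  refine ContinuousOn.integrableOn_compact (isCompact_closedBall X r) ?_
  refine (Continuous.continuousOn (by fun_prop)).mul
    ((PiLp.continuous_apply 2 _ i).continuousOn.div (by fun_prop) fun z hz => ?_)
  exact pow_ne_zero n (norm_ne_zero_iff.mpr (ne_of_mem_of_not_mem hz h₀))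

theorem integrableOn_and_le_setIntegral_exp_mul_div_norm_pow (n : ℕ) (hXi : ‖X‖ / 5 ≤ X i)
    (hX₀ : 1 / 2 ≤ ‖X‖) (hX₁ : ‖X‖ ≤ 5 / 2) {τ : ℝ} (hτ₀ : 0 < τ) (hτ₁ : τ ≤ 1) :
    IntegrableOn (fun z : EuclideanSpace ℝ ι => exp (-‖X - z‖ ^ 2 / τ) * (z i / ‖z‖ ^ n))
        (closedBall X (‖X‖ / 10)) ∧
      exp (-(1 / 20) ^ 2) * ((1 / 20) / (11 / 4) ^ n) *
          ((√τ / 20) ^ Fintype.card ι * volume.real (ball (0 : EuclideanSpace ℝ ι) 1)) ≤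
        ∫ z in closedBall X (‖X‖ / 10), exp (-‖X - z‖ ^ 2 / τ) * (z i / ‖z‖ ^ n) := by
  have happly : ∀ z ∈ closedBall X (‖X‖ / 10), 1 / 20 ≤ z i := fun z hz => by
    linarith [norm_div_ten_le_apply_of_mem_closedBall hXi hz]
  have hnorm : ∀ z ∈ closedBall X (‖X‖ / 10), ‖z‖ ≤ 11 / 4 := fun z hz => by
    linarith [norm_le_of_mem_closedBall hz]
  have h₀ : (0 : EuclideanSpace ℝ ι) ∉ closedBall X (‖X‖ / 10) := fun h => by
    linarith [happly 0 h, show (0 : EuclideanSpace ℝ ι) i = 0 from rfl]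
  have hint := integrableOn_exp_mul_div_norm_pow (i := i) n (τ := τ) h₀
  have hsub : closedBall X (√τ / 20) ⊆ closedBall X (‖X‖ / 10) :=
    closedBall_subset_closedBall (by linarith [sqrt_le_one.mpr hτ₁])
  refine ⟨hint, ?_⟩
  rw [← finrank_euclideanSpace (𝕜 := ℝ) (ι := ι),
    ← Measure.addHaar_real_closedBall volume X (by positivity)]
  refine mul_measureReal_le_setIntegral_of_subset measurableSet_closedBall
    measurableSet_closedBall measure_closedBall_lt_top.ne hsub hint
    (fun z hz => mul_nonneg (exp_pos _).le (div_nonneg (by linarith [happly z hz]) (by positivity)))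
    (fun z hz => ?_)
  have hgauss : ‖X - z‖ ≤ 1 / 20 * √τ := by
    rw [← dist_eq_norm, dist_comm]; linarith [mem_closedBall.mp hz]
  have hzi := happly z (hsub hz)
  have hz₀ : 0 < ‖z‖ := norm_pos_iff.mpr (ne_of_mem_of_not_mem (hsub hz) h₀)
  refine mul_le_mul (exp_neg_sq_le_exp_neg_sq_div hτ₀ (norm_nonneg _) hgauss)
    (div_le_div₀ (by linarith) hzi (pow_pos hz₀ n) ?_) (by positivity) (exp_pos _).le
  exact pow_le_pow_left₀ hz₀.le (hnorm z (hsub hz)) n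

end Cone

/-- Estimate of `J₁`: for `X₁ ≥ |X'|/5`, `1/2 ≤ |X'| ≤ 5/2` and `0 < τ ≤ 1`,
`∫_{|X'-z'| ≤ |X'|/10} e^{-|X'-z'|²/τ} z₁/|z'|ⁿ dz' ≥ c τ^{(n-1)/2}`. -/
theorem stmt_7 (n : ℕ) (hn : 2 ≤ n) :
    ∃ c : ℝ, 0 < c ∧
      ∀ X' : EuclideanSpace ℝ (Fin (n-1)),
        ‖X'‖/5 ≤ X' ⟨0, by omega⟩ → 1/2 ≤ ‖X'‖ → ‖X'‖ ≤ 5/2 →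
        ∀ τ : ℝ, 0 < τ → τ ≤ 1 →
          IntegrableOn
            (fun z' : EuclideanSpace ℝ (Fin (n-1)) =>
              Real.exp (-‖X' - z'‖^2/τ) * (z' ⟨0, by omega⟩ / ‖z'‖^n))
            {z' : EuclideanSpace ℝ (Fin (n-1)) | ‖X' - z'‖ ≤ ‖X'‖/10} volume ∧
          c * τ ^ (((n:ℝ) - 1)/2) ≤
            ∫ z' in {z' : EuclideanSpace ℝ (Fin (n-1)) | ‖X' - z'‖ ≤ ‖X'‖/10},
              Real.exp (-‖X' - z'‖^2/τ) * (z' ⟨0, by omega⟩ / ‖z'‖^n) := by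
  have hball : 0 < volume.real (ball (0 : EuclideanSpace ℝ (Fin (n - 1))) 1) :=
    ENNReal.toReal_pos (measure_ball_pos _ _ one_pos).ne' measure_ball_lt_top.ne
  refine ⟨exp (-(1 / 20) ^ 2) * ((1 / 20) / (11 / 4) ^ n) *
    volume.real (ball (0 : EuclideanSpace ℝ (Fin (n - 1))) 1) / 20 ^ (n - 1), by positivity, ?_⟩
  intro X' hXi hX₀ hX₁ τ hτ₀ hτ₁
  have hset : {z' : EuclideanSpace ℝ (Fin (n - 1)) | ‖X' - z'‖ ≤ ‖X'‖ / 10} =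
      closedBall X' (‖X'‖ / 10) := by
    ext z'; rw [mem_closedBall, dist_eq_norm']; rfl
  have hpow : τ ^ (((n : ℝ) - 1) / 2) = √τ ^ (n - 1) := by
    rw [rpow_div_two_eq_sqrt _ hτ₀.le, ← Nat.cast_pred (by omega), rpow_natCast]
  obtain ⟨hint, hle⟩ :=
    integrableOn_and_le_setIntegral_exp_mul_div_norm_pow n hXi hX₀ hX₁ hτ₀ hτ₁
  rw [hset, hpow]
  refine ⟨hint, le_of_eq_of_le ?_ hle⟩
  rw [Fintype.card_fin, div_pow √τ]
  ring
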